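/- Let R be a ring with identity 1 in which 2 = 0, let e ∈ R be an idempotent, and let x ∈ R be nilpotent with e·x + x·e = x. If (e + x)^(2^m) = 1 for some natural number m, then e = 1 and x = 0. -/

import Mathlib

open Finset

/- With `a = e + x`, the relations give `a ^ 2 = a + x ^ 2` with `x ^ 2` commuting with `a`, so
iterating the Frobenius of commuting elements yields `a ^ 2 ^ m = e + ∑_{i ≤ m} x ^ 2 ^ i`.
If this is `1`, then `1 - e` is a sum of commuting nilpotents, hence a nilpotent idempotent,
hence `0`; and `e = 1` turns `e x + x e = x` into `x = 0`. -/

section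

variable {R : Type*}

theorem commute_sq_of_mul_add_mul_eq_self [Ring R] {e x : R} (hx : e * x + x * e = x) :
    Commute e (x ^ 2) := by
  have hex : e * x = x - x * e := eq_sub_of_add_eq hx
  have hxe : x * e = x - e * x := eq_sub_of_add_eq' hx
  calc e * x ^ 2 = e * x * x := by rw [sq, mul_assoc]
    _ = x * x - x * e * x := by rw [hex, sub_mul]
    _ = x * x - x * (e * x) := by rw [mul_assoc]
    _ = x * (x * e) := by rw [hxe, mul_sub]
    _ = x ^ 2 * e := by rw [sq, mul_assoc]

theorem IsIdempotentElem.add_sq_of_mul_add_mul_eq_self [Ring R] {e x : R}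
    (he : IsIdempotentElem e) (hx : e * x + x * e = x) : (e + x) ^ 2 = e + x + x ^ 2 := by
  calc (e + x) ^ 2 = e * e + (e * x + x * e) + x ^ 2 := by noncomm_ring
    _ = e + x + x ^ 2 := by rw [he.eq, hx]

theorem pow_two_pow_eq_add_sum_of_sq_eq_add [Semiring R] [CharP R 2] {a c : R}
    (hsq : a ^ 2 = a + c) (hc : Commute a c) (k : ℕ) :
    a ^ 2 ^ k = a + ∑ i ∈ range k, c ^ 2 ^ i := by
  induction k with
  | zero => simp
  | succ k ih =>
    rw [pow_succ', pow_mul, hsq, add_pow_char_pow_of_commute 2 k hc, ih, sum_range_succ,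
      add_assoc]

theorem IsNilpotent.isNilpotent_sum_pow [Semiring R] {x : R} (hx : IsNilpotent x)
    {ι : Type*} (s : Finset ι) {n : ι → ℕ} (hn : ∀ i ∈ s, n i ≠ 0) :
    IsNilpotent (∑ i ∈ s, x ^ n i) :=
  Commute.isNilpotent_sum (fun i hi ↦ hx.pow_of_pos (hn i hi))
    fun _ _ _ _ ↦ Commute.pow_pow_self x _ _

end

theorem stmt_8 {R : Type*} [Ring R] (h2 : (2 : R) = 0)
    (e x : R) (he : e * e = e) (hxnil : IsNilpotent x)
    (hx : e * x + x * e = x) (m : ℕ) (h1 : (e + x) ^ (2 ^ m) = 1) :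
    e = 1 ∧ x = 0 := by
  nontriviality R
  have : CharP R 2 := CharTwo.of_one_ne_zero_of_two_eq_zero one_ne_zero h2
  have hsq := IsIdempotentElem.add_sq_of_mul_add_mul_eq_self he hx
  have hcomm := (commute_sq_of_mul_add_mul_eq_self hx).add_left (Commute.self_pow x 2)
  have hsum : 1 - e = ∑ i ∈ range (m + 1), x ^ 2 ^ i := by
    rw [← h1, pow_two_pow_eq_add_sum_of_sq_eq_add hsq hcomm m, sum_range_succ']
    simp only [← pow_mul, ← pow_succ', pow_zero, pow_one]
    abel
  have hnil : IsNilpotent (1 - e) :=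
    hsum ▸ hxnil.isNilpotent_sum_pow _ fun _ _ ↦ (pow_pos two_pos _).ne'
  have he1 : e = 1 :=
    (sub_eq_zero.1 ((IsIdempotentElem.one_sub he).eq_zero_of_isNilpotent hnil)).symm
  exact ⟨he1, by simpa [he1] using hx⟩
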